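/- For every n > 3, Bob has a winning strategy in the synchronization game on the Černý automaton C_n. -/
import Mathlib


/-- Apply a word (list of letters) to a state of a DFA with transition function `δ`. -/
def applyWord {Q A : Type*} (δ : Q → A → Q) (q : Q) : List A → Q
  | [] => q
  | a :: w => applyWord δ (δ q a) w

/-- The history (list) of letters played after `n` moves of the synchronization game,
when Alice uses strategy `σA` and Bob uses strategy `σB`; Alice moves first, i.e.
the letters at even indices are chosen by Alice and those at odd indices by Bob. -/
def playHist {A : Type*} (σA σB : List A → A) : ℕ → List A
  | 0 => []
  | n + 1 =>
      let h := playHist σA σB n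
      h ++ [if n % 2 = 0 then σA h else σB h]

/-- `w` synchronizes the position `P` (a set of states holding coins) to a single state. -/
def IsResetFrom {Q A : Type*} [DecidableEq Q] (δ : Q → A → Q) (P : Finset Q)
    (w : List A) : Prop :=
  (P.image fun q => applyWord δ q w).card = 1

/-- Alice has a winning strategy in the synchronization game starting from position `P`. -/
def AliceWins {Q A : Type*} [DecidableEq Q] (δ : Q → A → Q) (P : Finset Q) : Prop :=
  ∃ σA : List A → A, ∀ σB : List A → A, ∃ k : ℕ,
    IsResetFrom δ P (playHist σA σB k)

/-- Alice has a strategy in the synchronization game starting from position `P` that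
guarantees reaching a singleton position in a play in which Alice has chosen at most
`m` letters (after `k` letters in total, Alice has chosen `(k + 1) / 2` of them). -/
def AliceWinsWithin {Q A : Type*} [DecidableEq Q] (δ : Q → A → Q) (P : Finset Q)
    (m : ℕ) : Prop :=
  ∃ σA : List A → A, ∀ σB : List A → A, ∃ k : ℕ,
    IsResetFrom δ P (playHist σA σB k) ∧ (k + 1) / 2 ≤ m

/-- Bob has a winning strategy in the synchronization game starting from position `P`:
against every strategy of Alice the position never becomes a singleton. -/
def BobWins {Q A : Type*} [DecidableEq Q] (δ : Q → A → Q) (P : Finset Q) : Prop :=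
  ∃ σB : List A → A, ∀ σA : List A → A, ∀ k : ℕ,
    ¬ IsResetFrom δ P (playHist σA σB k)

/-- The Černý automaton `C_n`: states are residues modulo `n`, the letter `a` (here
`false`) sends `0` to `1` and fixes every other state, and the letter `b` (here `true`)
adds `1` modulo `n`. -/
def cernyStep (n : ℕ) : ZMod n → Bool → ZMod n
  | m, false => if m = 0 then 1 else m
  | m, true => m + 1

lemma applyWord_append {Q A : Type*} (δ : Q → A → Q) (q : Q) (w₁ w₂ : List A) :
    applyWord δ q (w₁ ++ w₂) = applyWord δ (applyWord δ q w₁) w₂ := by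
  induction w₁ generalizing q with
  | nil => rfl
  | cons a t ih => simp [applyWord, ih]

section
variable (n : ℕ) [NeZero n]

def cpos (h : List Bool) : Finset (ZMod n) :=
  Finset.univ.image fun q => applyWord (cernyStep n) q h

lemma cpos_append (h : List Bool) (c : Bool) :
    cpos n (h ++ [c]) = (cpos n h).image (fun q => cernyStep n q c) := by
  unfold cpos
  rw [Finset.image_image]
  congr 1
  funext q
  rw [applyWord_append]
  rfl

lemma img_univ_a (hn : 3 < n) :
    (Finset.univ : Finset (ZMod n)).image (fun q => cernyStep n q false)
    = Finset.univ.erase 0 := by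
  haveI : Fact (1 < n) := ⟨by omega⟩
  ext x
  simp only [Finset.mem_image, Finset.mem_erase, Finset.mem_univ, and_true, true_and]
  constructor
  · rintro ⟨m, hm⟩
    subst hm
    by_cases h : m = 0 <;> simp [cernyStep, h]
  · intro hx
    exact ⟨x, by simp [cernyStep, hx]⟩

lemma img_univ_b : (Finset.univ : Finset (ZMod n)).image (fun q => cernyStep n q true)
    = Finset.univ := by
  ext x
  simp only [Finset.mem_image, Finset.mem_univ, iff_true, true_and]
  exact ⟨x - 1, by simp [cernyStep]⟩

lemma img_e0_a : ((Finset.univ : Finset (ZMod n)).erase 0).image (fun q => cernyStep n q false)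
    = Finset.univ.erase 0 := by
  ext x
  simp only [Finset.mem_image, Finset.mem_erase, Finset.mem_univ, and_true]
  constructor
  · rintro ⟨m, hm, hmx⟩
    subst hmx
    simpa [cernyStep, hm] using hm
  · intro hx
    exact ⟨x, hx, by simp [cernyStep, hx]⟩

lemma img_e0_b :
    ((Finset.univ : Finset (ZMod n)).erase 0).image (fun q => cernyStep n q true)
    = Finset.univ.erase 1 := by
  have hinj : Function.Injective (fun q : ZMod n => cernyStep n q true) := by
    intro a b h
    simpa [cernyStep] using h
  rw [Finset.image_erase hinj, img_univ_b]
  norm_num [cernyStep]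

lemma img_e1_a (hn : 3 < n) :
    ((Finset.univ : Finset (ZMod n)).erase 1).image (fun q => cernyStep n q false)
    = Finset.univ.erase 0 := by
  haveI : Fact (1 < n) := ⟨by omega⟩
  ext x
  simp only [Finset.mem_image, Finset.mem_erase, Finset.mem_univ, and_true]
  constructor
  · rintro ⟨m, hm, hmx⟩
    subst hmx
    by_cases h : m = 0 <;> simp [cernyStep, h]
  · intro hx
    by_cases h : x = 1
    · refine ⟨0, one_ne_zero.symm, by simp [cernyStep, h.symm]⟩
    · exact ⟨x, h, by simp [cernyStep, hx]⟩

lemma cerny_inv (hn : 3 < n) (σA : List Bool → Bool) (k : ℕ) :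
    (k % 2 = 0 →
      cpos n (playHist σA (fun _ => false) k) = Finset.univ ∨
      cpos n (playHist σA (fun _ => false) k) = Finset.univ.erase 0) ∧
    (cpos n (playHist σA (fun _ => false) k) = Finset.univ ∨
      cpos n (playHist σA (fun _ => false) k) = Finset.univ.erase 0 ∨
      cpos n (playHist σA (fun _ => false) k) = Finset.univ.erase 1) := by
  induction k with
  | zero =>
      constructor <;> intros <;>
      · left
        simp [cpos, playHist, applyWord]
  | succ k ih =>
      have hstep : playHist σA (fun _ => false) (k + 1) =
          playHist σA (fun _ => false) k ++
            [if k % 2 = 0 then σA (playHist σA (fun _ => false) k) else false] := rfl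
      rw [hstep, cpos_append]
      by_cases hk : k % 2 = 0
      · rcases ih.1 hk with h | h <;> rw [h] <;>
        · constructor
          · intro h2; omega
          · rcases (if k % 2 = 0 then σA (playHist σA (fun _ => false) k) else false) with _ | _
            · simp [img_univ_a n hn, img_e0_a]
            · simp [img_univ_b, img_e0_b]
      · have hf : (if k % 2 = 0 then σA (playHist σA (fun _ => false) k) else false) = false := by
          simp [hk]
        rw [hf]
        rcases ih.2 with h | h | h <;> rw [h] <;>
          simp [img_univ_a n hn, img_e0_a, img_e1_a n hn]

end

/-- For each `n > 3`, Bob has a winning strategy in the synchronization game on the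
Černý automaton `C_n`. -/
theorem bob_wins_on_cerny (n : ℕ) [NeZero n] (hn : 3 < n) :
    BobWins (cernyStep n) Finset.univ := by
  refine ⟨fun _ => false, fun σA k h1 => ?_⟩
  have hcard : (cpos n (playHist σA (fun _ => false) k)).card = 1 := h1
  have hn' : (Finset.univ : Finset (ZMod n)).card = n := by
    simp [Finset.card_univ, ZMod.card]
  rcases (cerny_inv n hn σA k).2 with h | h | h <;> rw [h] at hcard <;>
    simp [Finset.card_erase_of_mem, hn'] at hcard <;> omega
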